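/- Let ρ_in be a positive semidefinite n×n complex matrix with Tr ρ_in = 1. For k = 0,…,N−1, let U_k and Ũ_k be unitary n×n complex matrices and let π_k be n×n complex matrices with π_kᴴ*π_k ≤ I (i.e., I − π_kᴴ*π_k is positive semidefinite). Define recursively ρ_0 := ρ_in, ρ_{k+1} := π_k*U_k*ρ_k*U_kᴴ*π_kᴴ, and ρ̃_0 := ρ_in, ρ̃_{k+1} := π_k*Ũ_k*ρ̃_k*Ũ_kᴴ*π_kᴴ. Then ‖ρ̃_N − ρ_N‖₁ ≤ 2·∑_{k=0}^{N−1} ‖Ũ_k − U_k‖. -/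

import Mathlib

open scoped Matrix.Norms.L2Operator ComplexOrder
open Matrix

/-- The trace norm of a complex square matrix: the trace of the positive semidefinite
square root of `Aᴴ * A` (a nonnegative real number). -/
noncomputable def traceNorm {n : Type*} [Fintype n] [DecidableEq n]
    (A : Matrix n n ℂ) : ℝ :=
  (((Matrix.posSemidef_conjTranspose_mul_self A).1.eigenvectorUnitary : Matrix n n ℂ) *
      diagonal (((↑) : ℝ → ℂ) ∘ (Real.sqrt ∘ (Matrix.posSemidef_conjTranspose_mul_self A).1.eigenvalues)) *
      (star ((Matrix.posSemidef_conjTranspose_mul_self A).1.eigenvectorUnitary : Matrix n n ℂ))).trace.re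

/-! On Hermitian matrices the trace norm `∑ |λᵢ|` is dual to the operator norm:
`Re Tr (M X) ≤ ‖M‖ ‖X‖₁`, with equality for the contraction `M = sign X`. So the trace norm of a
Hermitian matrix is bounded by bounding `Re Tr (W ·)` for every contraction `W`. With the
contractions `M = π U` and `M' = π Ũ`, one step of the two trajectories splits as
`M' X M'ᴴ - M Y Mᴴ = M' (X - Y) M'ᴴ + M' Y (M' - M)ᴴ + (M' - M) Y Mᴴ`, so the distance grows by at
most `2 ‖M' - M‖ ‖Y‖₁ ≤ 2 ‖Ũ - U‖`, as conjugation by contractions keeps `‖ρₖ‖₁ ≤ ‖ρ_in‖₁ = 1`. -/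

open scoped MatrixOrder

lemma CStarAlgebra.norm_le_one_of_star_mul_self_le_one {A : Type*} [CStarAlgebra A]
    [PartialOrder A] [StarOrderedRing A] {a : A} (h : star a * a ≤ 1) : ‖a‖ ≤ 1 := by
  have h' := (norm_le_one_iff_of_nonneg (star a * a)).mpr h
  rw [CStarRing.norm_star_mul_self] at h'
  nlinarith [norm_nonneg a]

lemma Matrix.trace_eq_sum_inner {n : Type*} [Fintype n] [DecidableEq n] (X : Matrix n n ℂ)
    (b : OrthonormalBasis n ℂ (EuclideanSpace ℂ n)) :
    X.trace = ∑ i, inner ℂ (b i) (toEuclideanLin X (b i)) := by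
  rw [← LinearMap.trace_eq_sum_inner, toEuclideanLin_eq_toLin_orthonormal, trace_toLin_eq]

lemma traceNorm_eq_re_trace_abs {n : Type*} [Fintype n] [DecidableEq n] (A : Matrix n n ℂ) :
    traceNorm A = (CFC.abs A).trace.re := by
  have h := posSemidef_conjTranspose_mul_self A
  rw [CFC.abs, star_eq_conjTranspose, CFC.sqrt_eq_real_sqrt _ h.nonneg, cfcₙ_eq_cfc, h.1.cfc_eq]
  rfl

lemma traceNorm_nonneg {n : Type*} [Fintype n] [DecidableEq n] (A : Matrix n n ℂ) :
    0 ≤ traceNorm A := by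
  rw [traceNorm_eq_re_trace_abs]
  exact (Complex.nonneg_iff.mp (nonneg_iff_posSemidef.mp (CFC.abs_nonneg A)).trace_nonneg).1

namespace Matrix.IsHermitian

variable {n : Type*} [Fintype n] [DecidableEq n] {A : Matrix n n ℂ}

lemma trace_cfc (hA : A.IsHermitian) (f : ℝ → ℝ) :
    (cfc f A).trace = ∑ i, (f (hA.eigenvalues i) : ℂ) := by
  rw [hA.cfc_eq, Matrix.IsHermitian.cfc, Unitary.conjStarAlgAut_apply, trace_mul_cycle,
    Unitary.coe_star_mul_self, one_mul, trace_diagonal]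
  rfl

lemma traceNorm_eq_sum_abs_eigenvalues (hA : A.IsHermitian) :
    traceNorm A = ∑ i, |hA.eigenvalues i| := by
  rw [traceNorm_eq_re_trace_abs, CFC.abs_eq_cfc_norm A hA.isSelfAdjoint, hA.trace_cfc,
    Complex.re_sum]
  simp

lemma trace_mul_eq_sum_eigenvalues_mul_inner (hA : A.IsHermitian) (M : Matrix n n ℂ) :
    (M * A).trace = ∑ i, (hA.eigenvalues i : ℂ) *
      inner ℂ (hA.eigenvectorBasis i) (toEuclideanLin M (hA.eigenvectorBasis i)) := by
  rw [trace_eq_sum_inner _ hA.eigenvectorBasis]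
  refine Finset.sum_congr rfl fun i _ => ?_
  have h : (M * A) *ᵥ ⇑(hA.eigenvectorBasis i) =
      (hA.eigenvalues i : ℂ) • (M *ᵥ ⇑(hA.eigenvectorBasis i)) := by
    rw [← mulVec_mulVec, hA.mulVec_eigenvectorBasis, RCLike.real_smul_eq_coe_smul (K := ℂ)]
    exact mulVec_smul M _ _
  rw [← inner_smul_right]
  exact congrArg _ (congrArg (WithLp.toLp 2) h)

lemma re_trace_mul_le (hA : A.IsHermitian) (M : Matrix n n ℂ) :
    (M * A).trace.re ≤ ‖M‖ * traceNorm A := by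
  rw [hA.trace_mul_eq_sum_eigenvalues_mul_inner, Complex.re_sum,
    hA.traceNorm_eq_sum_abs_eigenvalues, Finset.mul_sum]
  gcongr with i
  set v := hA.eigenvectorBasis i
  have hv : ‖v‖ = 1 := hA.eigenvectorBasis.orthonormal.1 i
  calc _ ≤ ‖(hA.eigenvalues i : ℂ) * inner ℂ v (toEuclideanLin M v)‖ := Complex.re_le_norm _
    _ ≤ |hA.eigenvalues i| * (‖v‖ * (‖M‖ * ‖v‖)) := by
        rw [norm_mul, Complex.norm_real, Real.norm_eq_abs]
        gcongr
        exact (norm_inner_le_norm _ _).trans (by gcongr; exact l2_opNorm_mulVec M v)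
    _ = ‖M‖ * |hA.eigenvalues i| := by rw [hv]; ring

lemma exists_norm_le_one_re_trace_mul_eq (hA : A.IsHermitian) :
    ∃ W : Matrix n n ℂ, ‖W‖ ≤ 1 ∧ (W * A).trace.re = traceNorm A := by
  have hcont (f : ℝ → ℝ) : ContinuousOn f (spectrum ℝ A) := A.finite_real_spectrum.continuousOn f
  refine ⟨cfc (fun x => (SignType.sign x : ℝ)) A, ?_, ?_⟩
  · refine norm_cfc_le zero_le_one fun x _ => ?_
    cases SignType.sign x <;> simp
  · rw [traceNorm_eq_re_trace_abs, CFC.abs_eq_cfc_norm A hA.isSelfAdjoint]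
    conv_lhs => enter [1, 1, 2]; rw [← cfc_id' ℝ A]
    rw [← cfc_mul _ _ A (hcont _) (hcont _)]
    simp

lemma traceNorm_le_of_forall_re_trace_mul_le (hA : A.IsHermitian) {c : ℝ}
    (h : ∀ W : Matrix n n ℂ, ‖W‖ ≤ 1 → (W * A).trace.re ≤ c) : traceNorm A ≤ c := by
  obtain ⟨W, hW, hWA⟩ := hA.exists_norm_le_one_re_trace_mul_eq
  exact hWA ▸ h W hW

lemma re_trace_mul_mul_mul_le (hA : A.IsHermitian) {W : Matrix n n ℂ} (hW : ‖W‖ ≤ 1)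
    (B C : Matrix n n ℂ) : (W * (B * A * C)).trace.re ≤ ‖B‖ * ‖C‖ * traceNorm A := by
  have hcycle : (W * (B * A * C)).trace = (C * W * B * A).trace := by
    rw [show W * (B * A * C) = W * B * A * C by simp only [mul_assoc], trace_mul_comm]
    simp only [mul_assoc]
  have hnorm : ‖C * W * B‖ ≤ ‖B‖ * ‖C‖ := calc
    ‖C * W * B‖ ≤ ‖C‖ * ‖W‖ * ‖B‖ := norm_mul₃_le
    _ ≤ ‖C‖ * 1 * ‖B‖ := by gcongr
    _ = ‖B‖ * ‖C‖ := by ring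
  rw [hcycle]
  exact (hA.re_trace_mul_le _).trans (mul_le_mul_of_nonneg_right hnorm (traceNorm_nonneg A))

lemma traceNorm_mul_mul_conjTranspose_le (hA : A.IsHermitian) {M : Matrix n n ℂ}
    (hM : ‖M‖ ≤ 1) : traceNorm (M * A * Mᴴ) ≤ traceNorm A :=
  (isHermitian_mul_mul_conjTranspose M hA).traceNorm_le_of_forall_re_trace_mul_le fun _ hW =>
    (hA.re_trace_mul_mul_mul_le hW M Mᴴ).trans <| mul_le_of_le_one_left (traceNorm_nonneg A)
      (mul_le_one₀ hM (norm_nonneg _) ((norm_star M).trans_le hM))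

end Matrix.IsHermitian

section Trajectory

variable {n : Type*} [Fintype n] [DecidableEq n]

lemma traceNorm_conj_sub_conj_le {X Y M M' : Matrix n n ℂ} (hX : X.IsHermitian)
    (hY : Y.IsHermitian) (hM : ‖M‖ ≤ 1) (hM' : ‖M'‖ ≤ 1) :
    traceNorm (M' * X * M'ᴴ - M * Y * Mᴴ) ≤ traceNorm (X - Y) + 2 * ‖M' - M‖ * traceNorm Y := by
  have hsplit : M' * X * M'ᴴ - M * Y * Mᴴ =
      M' * (X - Y) * M'ᴴ + M' * Y * (M' - M)ᴴ + (M' - M) * Y * Mᴴ := by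
    simp only [conjTranspose_sub, mul_sub, sub_mul]
    abel
  refine ((isHermitian_mul_mul_conjTranspose M' hX).sub
    (isHermitian_mul_mul_conjTranspose M hY)).traceNorm_le_of_forall_re_trace_mul_le
    fun W hW => ?_
  have h₁ := (hX.sub hY).re_trace_mul_mul_mul_le hW M' M'ᴴ
  have h₂ := hY.re_trace_mul_mul_mul_le hW M' (M' - M)ᴴ
  have h₃ := hY.re_trace_mul_mul_mul_le hW (M' - M) Mᴴ
  have hnorm (B : Matrix n n ℂ) : ‖Bᴴ‖ = ‖B‖ := norm_star B
  rw [hnorm] at h₁ h₂ h₃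
  have hXY₀ := traceNorm_nonneg (X - Y)
  have hdY₀ := mul_nonneg (norm_nonneg (M' - M)) (traceNorm_nonneg Y)
  have e₁ : ‖M'‖ * ‖M'‖ * traceNorm (X - Y) ≤ traceNorm (X - Y) :=
    mul_le_of_le_one_left hXY₀ (mul_le_one₀ hM' (norm_nonneg _) hM')
  have e₂ : ‖M'‖ * ‖M' - M‖ * traceNorm Y ≤ ‖M' - M‖ * traceNorm Y := by
    rw [mul_assoc]; exact mul_le_of_le_one_left hdY₀ hM'
  have e₃ : ‖M' - M‖ * ‖M‖ * traceNorm Y ≤ ‖M' - M‖ * traceNorm Y := by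
    rw [mul_right_comm]; exact mul_le_of_le_one_right hdY₀ hM
  rw [hsplit, mul_add, mul_add, trace_add, trace_add, Complex.add_re, Complex.add_re]
  linarith

lemma isHermitian_and_traceNorm_le_of_conj_trajectory {N : ℕ} {M σ : ℕ → Matrix n n ℂ}
    (hM : ∀ k < N, ‖M k‖ ≤ 1) (h0 : (σ 0).IsHermitian)
    (hσ : ∀ k < N, σ (k + 1) = M k * σ k * (M k)ᴴ) :
    ∀ m ≤ N, (σ m).IsHermitian ∧ traceNorm (σ m) ≤ traceNorm (σ 0) := by
  intro m
  induction m with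
  | zero => exact fun _ => ⟨h0, le_rfl⟩
  | succ m ih =>
    intro hm
    obtain ⟨hH, hle⟩ := ih (by omega)
    rw [hσ m hm]
    exact ⟨isHermitian_mul_mul_conjTranspose _ hH,
      (hH.traceNorm_mul_mul_conjTranspose_le (hM m hm)).trans hle⟩

lemma traceNorm_sub_le_of_conj_trajectories {N : ℕ} {M M' σ σ' : ℕ → Matrix n n ℂ}
    (hM : ∀ k < N, ‖M k‖ ≤ 1) (hM' : ∀ k < N, ‖M' k‖ ≤ 1)
    (h0 : (σ 0).IsHermitian) (h0' : σ' 0 = σ 0)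
    (hσ : ∀ k < N, σ (k + 1) = M k * σ k * (M k)ᴴ)
    (hσ' : ∀ k < N, σ' (k + 1) = M' k * σ' k * (M' k)ᴴ) :
    traceNorm (σ' N - σ N) ≤ 2 * traceNorm (σ 0) * ∑ k ∈ Finset.range N, ‖M' k - M k‖ := by
  have hσN := isHermitian_and_traceNorm_le_of_conj_trajectory hM h0 hσ
  have hσN' := isHermitian_and_traceNorm_le_of_conj_trajectory hM' (h0' ▸ h0) hσ'
  suffices ∀ m ≤ N,
      traceNorm (σ' m - σ m) ≤ 2 * traceNorm (σ 0) * ∑ k ∈ Finset.range m, ‖M' k - M k‖ from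
    this N le_rfl
  intro m
  induction m with
  | zero => intro _; simp [h0', traceNorm_eq_re_trace_abs]
  | succ m ih =>
    intro hm
    obtain ⟨hH, hle⟩ := hσN m (by omega)
    rw [hσ m hm, hσ' m hm, Finset.sum_range_succ]
    have := norm_nonneg (M' m - M m)
    calc _ ≤ traceNorm (σ' m - σ m) + 2 * ‖M' m - M m‖ * traceNorm (σ m) :=
          traceNorm_conj_sub_conj_le (hσN' m (by omega)).1 hH (hM m hm) (hM' m hm)
      _ ≤ 2 * traceNorm (σ 0) * ∑ k ∈ Finset.range m, ‖M' k - M k‖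
          + 2 * ‖M' m - M m‖ * traceNorm (σ 0) := by gcongr; exact ih (by omega)
      _ = _ := by ring

end Trajectory

theorem trajectory_trace_norm_bound_general {n : Type*} [Fintype n] [DecidableEq n]
    (N : ℕ) (ρin : Matrix n n ℂ) (hin : ρin.PosSemidef) (htr : ρin.trace = 1)
    (U Ut P : ℕ → Matrix n n ℂ)
    (hU : ∀ k < N, U k ∈ Matrix.unitaryGroup n ℂ)
    (hUt : ∀ k < N, Ut k ∈ Matrix.unitaryGroup n ℂ)
    (hP : ∀ k < N, ((1 : Matrix n n ℂ) - (P k)ᴴ * P k).PosSemidef)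
    (ρ ρt : ℕ → Matrix n n ℂ)
    (hρ0 : ρ 0 = ρin) (hρt0 : ρt 0 = ρin)
    (hρ : ∀ k < N, ρ (k + 1) = P k * U k * ρ k * (U k)ᴴ * (P k)ᴴ)
    (hρt : ∀ k < N, ρt (k + 1) = P k * Ut k * ρt k * (Ut k)ᴴ * (P k)ᴴ) :
    traceNorm (ρt N - ρ N) ≤ 2 * ∑ k ∈ Finset.range N, ‖Ut k - U k‖ := by
  have hPk : ∀ k < N, ‖P k‖ ≤ 1 := fun k hk =>
    CStarAlgebra.norm_le_one_of_star_mul_self_le_one (le_iff.mpr (hP k hk))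
  have hPV : ∀ k < N, ∀ V ∈ unitaryGroup n ℂ, ‖P k * V‖ ≤ 1 := fun k hk V hV =>
    (norm_mul_le _ _).trans <| mul_le_one₀ (hPk k hk) (norm_nonneg _)
      (CStarAlgebra.norm_le_one_of_star_mul_self_le_one (Unitary.star_mul_self_of_mem hV).le)
  have hconj (Q V σ : Matrix n n ℂ) : Q * V * σ * Vᴴ * Qᴴ = Q * V * σ * (Q * V)ᴴ := by
    simp only [conjTranspose_mul, mul_assoc]
  have hbound := traceNorm_sub_le_of_conj_trajectories (fun k hk => hPV k hk _ (hU k hk))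
    (fun k hk => hPV k hk _ (hUt k hk)) (hρ0 ▸ hin.isHermitian) (hρt0.trans hρ0.symm)
    (fun k hk => (hρ k hk).trans (hconj _ _ _)) (fun k hk => (hρt k hk).trans (hconj _ _ _))
  have hρ0_traceNorm : traceNorm (ρ 0) = 1 := by
    rw [hρ0, traceNorm_eq_re_trace_abs, CFC.abs_of_nonneg ρin hin.nonneg, htr, Complex.one_re]
  refine hbound.trans ?_
  rw [hρ0_traceNorm, mul_one]
  gcongr with k hk
  rw [← mul_sub]
  exact (norm_mul_le _ _).trans <|
    mul_le_of_le_one_left (norm_nonneg _) (hPk k (Finset.mem_range.mp hk))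

/-- Trajectory-level trace-norm bound (Eq. SM trajectory_trace_bound_note_final):
comparing exact and implemented propagators interleaved with trace-non-increasing
single-Kraus operations, `‖ρ̃_N − ρ_N‖₁ ≤ 2 ∑_k ‖Ũ_k − U_k‖`. -/
theorem trajectory_trace_norm_bound {n : Type*} [Fintype n] [DecidableEq n] [Nonempty n]
    (N : ℕ) (ρin : Matrix n n ℂ) (hin : ρin.PosSemidef) (htr : ρin.trace = 1)
    (U Ut P : ℕ → Matrix n n ℂ)
    (hU : ∀ k < N, U k ∈ Matrix.unitaryGroup n ℂ)
    (hUt : ∀ k < N, Ut k ∈ Matrix.unitaryGroup n ℂ)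
    (hP : ∀ k < N, ((1 : Matrix n n ℂ) - (P k)ᴴ * P k).PosSemidef)
    (ρ ρt : ℕ → Matrix n n ℂ)
    (hρ0 : ρ 0 = ρin) (hρt0 : ρt 0 = ρin)
    (hρ : ∀ k < N, ρ (k + 1) = P k * U k * ρ k * (U k)ᴴ * (P k)ᴴ)
    (hρt : ∀ k < N, ρt (k + 1) = P k * Ut k * ρt k * (Ut k)ᴴ * (P k)ᴴ) :
    traceNorm (ρt N - ρ N) ≤ 2 * ∑ k ∈ Finset.range N, ‖Ut k - U k‖ :=
  trajectory_trace_norm_bound_general N ρin hin htr U Ut P hU hUt hP ρ ρt hρ0 hρt0 hρ hρt
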